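/- Let d ≥ 2, let q = (μ₁,…,μ_d) ∈ Δ_d with μ₁ ≥ … ≥ μ_d, let ε ∈ (0,1], and assume (1/2)Σ_{i=1}^d |μ_i − 1/d| > ε. Let (α₁, n) and (α₂, m) be the unique pairs with Σ_{i=d−n+1}^d |α₁ − μ_i| = ε, μ_{d−n+1} < α₁ ≤ μ_{d−n}, Σ_{j=1}^m |α₂ − μ_j| = ε, and μ_{m+1} ≤ α₂ < μ_m. Define p*_ε(q) ∈ ℝ^d by: entry α₂ in positions 1,…,m; entry μ_i in positions i = m+1,…,d−n; and entry α₁ in positions d−n+1,…,d. Then p*_ε(q) ∈ Δ_d, all its entries are strictly positive, (1/2)‖p*_ε(q) − q‖₁ = ε, and p*_ε(q) ≺ p for every p ∈ B_ε(q). -/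

import Mathlib

/-!
`p*` is `μ` clipped to the interval `[α₁, α₂]`: since `μ` is more than `ε` away from uniform,
`α₁ ≤ 1/d ≤ α₂`, so the clipped vector is non-increasing, takes exactly `ε` of mass from the
`m` largest entries of `μ` and gives exactly `ε` to the `n` smallest.

A vector `p` of the ball loses at most `ε` on any set of coordinates. For `m ≤ k ≤ d - n` this
bounds the `k` largest entries of `p` below by those of `p*` directly. For `k ≤ m`, the first `m`
coordinates carry at least `m α₂` of `p`, so the `k` largest of them carry at least `k α₂`;
dually, for `k ≥ d - n`, the last `n` coordinates carry at most `n α₁` of `p`, so the `d - k`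
smallest of them carry at most `(d - k) α₁`.
-/

open scoped BigOperators

noncomputable section

/-- `lowCond μ ε α n` : `(α, n) = (α₁, n)` satisfies `Σ_{i=d−n+1}^d |α − μᵢ| = ε` and
`μ_{d−n+1} < α ≤ μ_{d−n}` (the latter expressed entrywise, which for non-increasing `μ` is
equivalent). -/
def lowCond {d : ℕ} (μ : Fin d → ℝ) (ε α : ℝ) (n : ℕ) : Prop :=
  0 ≤ α ∧ α ≤ 1 ∧ 1 ≤ n ∧ n ≤ d - 1 ∧
  (∑ i : Fin d, if d - n ≤ (i : ℕ) then |α - μ i| else 0) = ε ∧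
  (∀ i : Fin d, d - n ≤ (i : ℕ) → μ i < α) ∧
  (∀ i : Fin d, (i : ℕ) < d - n → α ≤ μ i)

/-- `highCond μ ε α m` : `(α, m) = (α₂, m)` satisfies `Σ_{j=1}^m |α − μⱼ| = ε` and
`μ_{m+1} ≤ α < μ_m` (the latter expressed entrywise, which for non-increasing `μ` is
equivalent). -/
def highCond {d : ℕ} (μ : Fin d → ℝ) (ε α : ℝ) (m : ℕ) : Prop :=
  0 ≤ α ∧ α ≤ 1 ∧ 1 ≤ m ∧ m ≤ d - 1 ∧
  (∑ i : Fin d, if (i : ℕ) < m then |α - μ i| else 0) = ε ∧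
  (∀ i : Fin d, (i : ℕ) < m → α < μ i) ∧
  (∀ i : Fin d, m ≤ (i : ℕ) → μ i ≤ α)

/-- Sum of the `k` largest entries of a vector (counted with multiplicity). -/
noncomputable def kMaxSum {d : ℕ} (v : Fin d → ℝ) (k : ℕ) : ℝ :=
  sSup ((fun s : Finset (Fin d) => ∑ i ∈ s, v i) '' {s | s.card = k})

/-- Vector majorization `x ≺ y`: the partial sums of the `k` largest entries of `x` are at
most those of `y` for `k = 1, …, d − 1`, and the total sums agree. -/
def vMaj {d : ℕ} (x y : Fin d → ℝ) : Prop :=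
  (∀ k, 1 ≤ k → k ≤ d - 1 → kMaxSum x k ≤ kMaxSum y k) ∧ (∑ i, x i) = (∑ i, y i)

open Finset

section

variable {ι 𝕜 : Type*} [Field 𝕜] [LinearOrder 𝕜] [IsStrictOrderedRing 𝕜]

theorem Finset.exists_subset_card_eq_mul_le_sum [DecidableEq ι] (f : ι → 𝕜) (S : Finset ι)
    {a : 𝕜} (hS : #S * a ≤ ∑ i ∈ S, f i) {k : ℕ} (hk : k ≤ #S) :
    ∃ T ⊆ S, #T = k ∧ k * a ≤ ∑ i ∈ T, f i := by
  induction S using Finset.induction_on_min_value f generalizing k with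
  | empty => exact ⟨∅, subset_rfl, (by simpa using hk : k = 0).symm, by simp_all⟩
  | insert x S hx hmin ih =>
    rw [card_insert_of_notMem hx] at hk
    rcases hk.eq_or_lt with rfl | hk
    · exact ⟨insert x S, subset_rfl, card_insert_of_notMem hx,
        by rwa [← card_insert_of_notMem hx]⟩
    rw [sum_insert hx, card_insert_of_notMem hx, Nat.cast_succ] at hS
    -- removing a minimal element cannot push the mean below `a`
    have hSa : #S * a ≤ ∑ i ∈ S, f i := by
      rcases le_or_gt a (f x) with hax | hxa
      · calc #S * a ≤ #S * f x := by gcongr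
          _ ≤ ∑ i ∈ S, f i := by simpa using card_nsmul_le_sum S f (f x) hmin
      · linarith
    obtain ⟨T, hTS, hT, hTa⟩ := ih hSa (Nat.lt_succ_iff.mp hk)
    exact ⟨T, hTS.trans (subset_insert x S), hT, hTa⟩

theorem Finset.sum_le_sum_of_card_eq_of_forall_le {M : Type*} [AddCommMonoid M] [LinearOrder M]
    [IsOrderedAddMonoid M] (f : ι → M) {A B : Finset ι} (hcard : #A = #B)
    (hle : ∀ i ∈ A, ∀ j ∈ B, f i ≤ f j) : ∑ i ∈ A, f i ≤ ∑ j ∈ B, f j := by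
  rcases B.eq_empty_or_nonempty with rfl | hB
  · simp_all
  obtain ⟨b, hb, hbmin⟩ := exists_min_image B f hB
  calc ∑ i ∈ A, f i ≤ #A • f b := sum_le_card_nsmul _ _ _ fun i hi => hle i hi b hb
    _ = #B • f b := by rw [hcard]
    _ ≤ ∑ j ∈ B, f j := card_nsmul_le_sum _ _ _ hbmin

theorem sum_posPart_sub_eq_half_sum_abs [Fintype ι] {p q : ι → 𝕜}
    (h : ∑ i, p i = ∑ i, q i) : ∑ i, (q i - p i)⁺ = 1 / 2 * ∑ i, |p i - q i| := by
  have key (i : ι) : 2 * (q i - p i)⁺ = |p i - q i| + (q i - p i) := by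
    rw [abs_sub_comm, abs_add_eq_two_nsmul_posPart, two_nsmul, two_mul]
  have : 2 * ∑ i, (q i - p i)⁺ = ∑ i, |p i - q i| := by
    simp only [mul_sum, key, sum_add_distrib, sum_sub_distrib, h, sub_self, add_zero]
  linarith

theorem sum_sub_sum_le_half_sum_abs [Fintype ι] {p q : ι → 𝕜} (h : ∑ i, p i = ∑ i, q i)
    (A : Finset ι) : ∑ i ∈ A, q i - ∑ i ∈ A, p i ≤ 1 / 2 * ∑ i, |p i - q i| := by
  rw [← sum_posPart_sub_eq_half_sum_abs h, ← sum_sub_distrib]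
  calc ∑ i ∈ A, (q i - p i) ≤ ∑ i ∈ A, (q i - p i)⁺ := sum_le_sum fun i _ => le_posPart _
    _ ≤ ∑ i, (q i - p i)⁺ :=
      sum_le_sum_of_subset_of_nonneg (subset_univ A) fun i _ _ => posPart_nonneg _

theorem max_min_eq_add_posPart_sub_posPart {a b : 𝕜} (hab : a ≤ b) (x : 𝕜) :
    max a (min b x) = x + (a - x)⁺ - (x - b)⁺ := by
  simp only [posPart_def, max_def, min_def]
  split_ifs <;> linarith

theorem abs_max_min_sub {a b : 𝕜} (hab : a ≤ b) (x : 𝕜) :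
    |max a (min b x) - x| = (a - x)⁺ + (x - b)⁺ := by
  simp only [posPart_def, max_def, min_def, abs_eq_max_neg]
  split_ifs <;> linarith

end

def initialSeg (d k : ℕ) : Finset (Fin d) := {i | (i : ℕ) < k}

section KMaxSum

variable {d : ℕ}

@[simp]
theorem mem_initialSeg {k : ℕ} {i : Fin d} : i ∈ initialSeg d k ↔ (i : ℕ) < k := by
  simp [initialSeg]

theorem card_initialSeg {k : ℕ} (hk : k ≤ d) : #(initialSeg d k) = k := by
  rw [initialSeg, Fin.card_filter_val_lt, min_eq_right hk]

theorem card_compl_initialSeg {k : ℕ} (hk : k ≤ d) : #(initialSeg d k)ᶜ = d - k := by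
  rw [card_compl, Fintype.card_fin, card_initialSeg hk]

theorem sum_initialSeg (v : Fin d → ℝ) (k : ℕ) :
    ∑ i ∈ initialSeg d k, v i = ∑ i : Fin d, if (i : ℕ) < k then v i else 0 :=
  sum_filter _ _

theorem sum_compl_initialSeg (v : Fin d → ℝ) (k : ℕ) :
    ∑ i ∈ (initialSeg d k)ᶜ, v i = ∑ i : Fin d, if k ≤ (i : ℕ) then v i else 0 := by
  simp only [initialSeg, compl_filter, not_lt, sum_filter]

theorem sum_le_kMaxSum (v : Fin d → ℝ) {s : Finset (Fin d)} {k : ℕ} (hs : #s = k) :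
    ∑ i ∈ s, v i ≤ kMaxSum v k :=
  le_csSup ((Set.toFinite _).image _).bddAbove ⟨s, hs, rfl⟩

theorem kMaxSum_eq_sum_initialSeg {v : Fin d → ℝ} (hv : Antitone v) {k : ℕ} (hk : k ≤ d) :
    kMaxSum v k = ∑ i ∈ initialSeg d k, v i := by
  refine le_antisymm (csSup_le ⟨_, _, card_initialSeg hk, rfl⟩ ?_)
    (sum_le_kMaxSum v (card_initialSeg hk))
  rintro _ ⟨s, hs, rfl⟩
  refine sum_sdiff_le_sum_sdiff.mp (sum_le_sum_of_card_eq_of_forall_le v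
    (card_sdiff_comm (hs.trans (card_initialSeg hk).symm)) fun i hi j hj => hv ?_)
  simp only [mem_sdiff, mem_initialSeg] at hi hj
  rw [Fin.le_def]
  omega

theorem mul_le_kMaxSum (v : Fin d → ℝ) {S : Finset (Fin d)} {a : ℝ}
    (hS : #S * a ≤ ∑ i ∈ S, v i) {k : ℕ} (hk : k ≤ #S) : k * a ≤ kMaxSum v k := by
  obtain ⟨T, -, hT, hTa⟩ := S.exists_subset_card_eq_mul_le_sum v hS hk
  exact hTa.trans (sum_le_kMaxSum v hT)

theorem sum_sub_mul_le_kMaxSum (v : Fin d → ℝ) {S : Finset (Fin d)} {b : ℝ}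
    (hS : ∑ i ∈ S, v i ≤ #S * b) {j : ℕ} (hj : j ≤ #S) :
    ∑ i, v i - j * b ≤ kMaxSum v (d - j) := by
  obtain ⟨U, -, hU, hUb⟩ := S.exists_subset_card_eq_mul_le_sum (-v) (a := -b)
    (by simpa [sum_neg_distrib] using hS) hj
  simp only [Pi.neg_apply, sum_neg_distrib, mul_neg, neg_le_neg_iff] at hUb
  have hUc : #Uᶜ = d - j := by rw [card_compl, Fintype.card_fin, hU]
  calc ∑ i, v i - j * b ≤ ∑ i, v i - ∑ i ∈ U, v i := by linarith
    _ = ∑ i ∈ Uᶜ, v i := by rw [← sum_compl_add_sum U]; ring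
    _ ≤ kMaxSum v (d - j) := sum_le_kMaxSum v hUc

end KMaxSum

section Pstar

variable {d : ℕ} {μ : Fin d → ℝ} {ε : ℝ}

theorem sum_eq_sum_one_div (hμ1 : ∑ i, μ i = 1) : ∑ i, μ i = ∑ _i : Fin d, (1 / d : ℝ) := by
  rcases Nat.eq_zero_or_pos d with rfl | hd
  · simp at hμ1
  · rw [hμ1, sum_const, card_univ, Fintype.card_fin, nsmul_eq_mul]
    field_simp

theorem le_one_div_of_sum_posPart_sub_le (hμ1 : ∑ i, μ i = 1)
    (hfar : ε < 1 / 2 * ∑ i, |μ i - 1 / d|) {α : ℝ} (hα : ∑ i, (α - μ i)⁺ ≤ ε) :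
    α ≤ 1 / d := by
  by_contra! h
  have hmono : ∑ i, (1 / d - μ i)⁺ ≤ ∑ i, (α - μ i)⁺ :=
    sum_le_sum fun i _ => posPart_mono (by linarith)
  linarith [sum_posPart_sub_eq_half_sum_abs (sum_eq_sum_one_div hμ1)]

theorem one_div_le_of_sum_posPart_sub_le (hμ1 : ∑ i, μ i = 1)
    (hfar : ε < 1 / 2 * ∑ i, |μ i - 1 / d|) {α : ℝ} (hα : ∑ i, (μ i - α)⁺ ≤ ε) :
    1 / d ≤ α := by
  by_contra! h
  have hmono : ∑ i, (μ i - 1 / d)⁺ ≤ ∑ i, (μ i - α)⁺ :=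
    sum_le_sum fun i _ => posPart_mono (by linarith)
  have hdist := sum_posPart_sub_eq_half_sum_abs (sum_eq_sum_one_div hμ1).symm
  simp only [abs_sub_comm (1 / (d : ℝ))] at hdist
  linarith

variable {α₁ α₂ : ℝ} {n m : ℕ}

theorem lowCond.sum_posPart_sub (h : lowCond μ ε α₁ n) : ∑ i, (α₁ - μ i)⁺ = ε := by
  obtain ⟨-, -, -, -, hsum, hlt, hle⟩ := h
  rw [← hsum]
  refine sum_congr rfl fun i _ => ?_
  split_ifs with hi
  · rw [posPart_eq_self.mpr (sub_pos.mpr (hlt i hi)).le, abs_of_pos (sub_pos.mpr (hlt i hi))]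
  · exact posPart_eq_zero.mpr (sub_nonpos.mpr (hle i (not_le.mp hi)))

theorem highCond.sum_posPart_sub (h : highCond μ ε α₂ m) : ∑ i, (μ i - α₂)⁺ = ε := by
  obtain ⟨-, -, -, -, hsum, hlt, hle⟩ := h
  rw [← hsum]
  refine sum_congr rfl fun i _ => ?_
  split_ifs with hi
  · rw [posPart_eq_self.mpr (sub_pos.mpr (hlt i hi)).le, abs_sub_comm,
      abs_of_pos (sub_pos.mpr (hlt i hi))]
  · exact posPart_eq_zero.mpr (sub_nonpos.mpr (hle i (not_lt.mp hi)))

theorem lowCond.pos (h : lowCond μ ε α₁ n) (hμ0 : ∀ i, 0 ≤ μ i) : 0 < α₁ := by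
  obtain ⟨-, -, hn1, hnd, -, hlt, -⟩ := h
  linarith [hlt ⟨d - 1, by omega⟩ (Nat.sub_le_sub_left hn1 d), hμ0 ⟨d - 1, by omega⟩]

theorem lowCond.sum_compl_initialSeg_le (h : lowCond μ ε α₁ n) {p : Fin d → ℝ}
    (hsum : ∑ i, p i = ∑ i, μ i)
    (hball : ∀ A : Finset (Fin d), ∑ i ∈ A, μ i - ∑ i ∈ A, p i ≤ ε) :
    ∑ i ∈ (initialSeg d (d - n))ᶜ, p i ≤ #(initialSeg d (d - n))ᶜ * α₁ := by
  obtain ⟨-, -, -, -, hsum₁, hlt, -⟩ := h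
  have hε : ∑ i ∈ (initialSeg d (d - n))ᶜ, (α₁ - μ i) = ε := by
    rw [sum_compl_initialSeg, ← hsum₁]
    refine sum_congr rfl fun i _ => ?_
    split_ifs with hi
    · exact (abs_of_pos (sub_pos.mpr (hlt i hi))).symm
    · rfl
  rw [sum_sub_distrib, sum_const, nsmul_eq_mul] at hε
  rw [← sum_compl_add_sum (initialSeg d (d - n)) p,
    ← sum_compl_add_sum (initialSeg d (d - n)) μ] at hsum
  linarith [hball (initialSeg d (d - n))]

theorem highCond.card_mul_le_sum_initialSeg (h : highCond μ ε α₂ m) {p : Fin d → ℝ}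
    (hball : ∀ A : Finset (Fin d), ∑ i ∈ A, μ i - ∑ i ∈ A, p i ≤ ε) :
    #(initialSeg d m) * α₂ ≤ ∑ i ∈ initialSeg d m, p i := by
  obtain ⟨-, -, -, -, hsum₂, hlt, -⟩ := h
  have hε : ∑ i ∈ initialSeg d m, (μ i - α₂) = ε := by
    rw [sum_initialSeg, ← hsum₂]
    refine sum_congr rfl fun i _ => ?_
    split_ifs with hi
    · rw [abs_sub_comm, abs_of_pos (sub_pos.mpr (hlt i hi))]
    · rfl
  rw [sum_sub_distrib, sum_const, nsmul_eq_mul] at hε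
  linarith [hball (initialSeg d m)]

def pstar (μ : Fin d → ℝ) (α₁ α₂ : ℝ) (n m : ℕ) (i : Fin d) : ℝ :=
  if (i : ℕ) < m then α₂ else if (i : ℕ) < d - n then μ i else α₁

theorem pstar_eq_max_min (h₁ : lowCond μ ε α₁ n) (h₂ : highCond μ ε α₂ m) (hα : α₁ ≤ α₂)
    (i : Fin d) : pstar μ α₁ α₂ n m i = max α₁ (min α₂ (μ i)) := by
  obtain ⟨-, -, -, -, -, hlt₁, hle₁⟩ := h₁
  obtain ⟨-, -, -, -, -, hlt₂, hle₂⟩ := h₂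
  unfold pstar
  split_ifs with hm hn
  · rw [min_eq_left (hlt₂ i hm).le, max_eq_right hα]
  · rw [min_eq_right (hle₂ i (not_lt.mp hm)), max_eq_right (hle₁ i hn)]
  · rw [max_eq_left ((min_le_right _ _).trans (hlt₁ i (not_lt.mp hn)).le)]

theorem antitone_pstar (hμ : Antitone μ) (h₁ : lowCond μ ε α₁ n) (h₂ : highCond μ ε α₂ m)
    (hα : α₁ ≤ α₂) : Antitone (pstar μ α₁ α₂ n m) := fun i j hij => by
  simp only [pstar_eq_max_min h₁ h₂ hα]
  exact max_le_max le_rfl (min_le_min le_rfl (hμ hij))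

theorem pstar_pos (h₁ : lowCond μ ε α₁ n) (h₂ : highCond μ ε α₂ m) (hα : α₁ ≤ α₂)
    (hα₁ : 0 < α₁) (i : Fin d) : 0 < pstar μ α₁ α₂ n m i := by
  rw [pstar_eq_max_min h₁ h₂ hα]
  exact lt_max_of_lt_left hα₁

theorem sum_pstar (hμ1 : ∑ i, μ i = 1) (h₁ : lowCond μ ε α₁ n) (h₂ : highCond μ ε α₂ m)
    (hα : α₁ ≤ α₂) : ∑ i, pstar μ α₁ α₂ n m i = 1 := by
  simp only [pstar_eq_max_min h₁ h₂ hα, max_min_eq_add_posPart_sub_posPart hα, sum_sub_distrib,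
    sum_add_distrib, h₁.sum_posPart_sub, h₂.sum_posPart_sub, hμ1, add_sub_cancel_right]

theorem half_sum_abs_pstar_sub (h₁ : lowCond μ ε α₁ n) (h₂ : highCond μ ε α₂ m)
    (hα : α₁ ≤ α₂) : 1 / 2 * ∑ i, |pstar μ α₁ α₂ n m i - μ i| = ε := by
  simp only [pstar_eq_max_min h₁ h₂ hα, abs_max_min_sub hα, sum_add_distrib,
    h₁.sum_posPart_sub, h₂.sum_posPart_sub]
  ring

theorem sum_initialSeg_pstar_of_le {k : ℕ} (hkm : k ≤ m) (hkd : k ≤ d) :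
    ∑ i ∈ initialSeg d k, pstar μ α₁ α₂ n m i = k * α₂ := by
  have hconst : ∀ i ∈ initialSeg d k, pstar μ α₁ α₂ n m i = α₂ := fun i hi =>
    if_pos ((mem_initialSeg.mp hi).trans_le hkm)
  rw [sum_congr rfl hconst, sum_const, card_initialSeg hkd, nsmul_eq_mul]

theorem sum_initialSeg_pstar_of_mem_Icc (h₁ : lowCond μ ε α₁ n) (h₂ : highCond μ ε α₂ m)
    (hα : α₁ ≤ α₂) {k : ℕ} (hk : k ∈ Set.Icc m (d - n)) :
    ∑ i ∈ initialSeg d k, pstar μ α₁ α₂ n m i = ∑ i ∈ initialSeg d k, μ i - ε := by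
  have ⟨_, _, _, _, _, _, hle₁⟩ := h₁
  have ⟨_, _, _, _, _, _, hle₂⟩ := h₂
  have hlow : ∑ i ∈ initialSeg d k, (α₁ - μ i)⁺ = 0 :=
    sum_eq_zero fun i hi => posPart_eq_zero.mpr
      (sub_nonpos.mpr (hle₁ i ((mem_initialSeg.mp hi).trans_le hk.2)))
  have hhigh : ∑ i ∈ initialSeg d k, (μ i - α₂)⁺ = ε := by
    rw [← h₂.sum_posPart_sub]
    refine sum_subset (subset_univ _) fun i _ hi => posPart_eq_zero.mpr (sub_nonpos.mpr ?_)
    exact hle₂ i (hk.1.trans (not_lt.mp (mt mem_initialSeg.mpr hi)))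
  simp only [pstar_eq_max_min h₁ h₂ hα, max_min_eq_add_posPart_sub_posPart hα, sum_sub_distrib,
    sum_add_distrib, hlow, hhigh, add_zero]

theorem sum_initialSeg_pstar_of_sub_le (hμ1 : ∑ i, μ i = 1) (h₁ : lowCond μ ε α₁ n)
    (h₂ : highCond μ ε α₂ m) (hα : α₁ ≤ α₂) {k : ℕ} (hnk : d - n ≤ k) (hkd : k ≤ d) :
    ∑ i ∈ initialSeg d k, pstar μ α₁ α₂ n m i = 1 - (d - k : ℕ) * α₁ := by
  have htail : ∑ i ∈ (initialSeg d k)ᶜ, pstar μ α₁ α₂ n m i = (d - k : ℕ) * α₁ := by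
    rw [sum_congr rfl fun i hi => ?_, sum_const, card_compl_initialSeg hkd, nsmul_eq_mul]
    have hi : k ≤ (i : ℕ) := by simpa using hi
    have ⟨_, _, _, _, _, hlt₁, _⟩ := h₁
    rw [pstar_eq_max_min h₁ h₂ hα,
      max_eq_left ((min_le_right _ _).trans (hlt₁ i (hnk.trans hi)).le)]
  rw [← sum_pstar hμ1 h₁ h₂ hα, ← sum_compl_add_sum (initialSeg d k), htail]
  ring

theorem vMaj_pstar (hμ : Antitone μ) (hμ1 : ∑ i, μ i = 1) (h₁ : lowCond μ ε α₁ n)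
    (h₂ : highCond μ ε α₂ m) (hα : α₁ ≤ α₂) {p : Fin d → ℝ} (hp1 : ∑ i, p i = 1)
    (hpε : 1 / 2 * ∑ i, |p i - μ i| ≤ ε) : vMaj (pstar μ α₁ α₂ n m) p := by
  have hsum : ∑ i, p i = ∑ i, μ i := hp1.trans hμ1.symm
  have hball (A : Finset (Fin d)) : ∑ i ∈ A, μ i - ∑ i ∈ A, p i ≤ ε :=
    (sum_sub_sum_le_half_sum_abs hsum A).trans hpε
  refine ⟨fun k _ hk => ?_, (sum_pstar hμ1 h₁ h₂ hα).trans hp1.symm⟩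
  have hkd : k ≤ d := hk.trans (Nat.sub_le d 1)
  rw [kMaxSum_eq_sum_initialSeg (antitone_pstar hμ h₁ h₂ hα) hkd]
  rcases le_total k m with hkm | hmk
  · rw [sum_initialSeg_pstar_of_le hkm hkd]
    have ⟨_, _, _, hmd, _⟩ := h₂
    exact mul_le_kMaxSum p (h₂.card_mul_le_sum_initialSeg hball)
      (by rwa [card_initialSeg (by omega)])
  rcases le_total k (d - n) with hkn | hnk
  · rw [sum_initialSeg_pstar_of_mem_Icc h₁ h₂ hα ⟨hmk, hkn⟩]
    linarith [hball (initialSeg d k), sum_le_kMaxSum p (card_initialSeg hkd)]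
  · rw [sum_initialSeg_pstar_of_sub_le hμ1 h₁ h₂ hα hnk hkd]
    have := sum_sub_mul_le_kMaxSum p (h₁.sum_compl_initialSeg_le hsum hball) (j := d - k)
      (by rw [card_compl_initialSeg (Nat.sub_le d n)]; omega)
    rwa [hp1, Nat.sub_sub_self hkd] at this

end Pstar

theorem pstar_minimal_in_majorization_general
    {d : ℕ} (μ : Fin d → ℝ)
    (hμ0 : ∀ i, 0 ≤ μ i) (hμ1 : ∑ i, μ i = 1)
    (hsort : ∀ i j : Fin d, i ≤ j → μ j ≤ μ i)
    (ε : ℝ)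
    (hfar : ε < (1 / 2 : ℝ) * ∑ i, |μ i - 1 / d|)
    (α₁ : ℝ) (n : ℕ) (α₂ : ℝ) (m : ℕ)
    (h₁ : lowCond μ ε α₁ n) (h₂ : highCond μ ε α₂ m) :
    ((∀ i : Fin d,
        0 < (if (i : ℕ) < m then α₂ else if (i : ℕ) < d - n then μ i else α₁)) ∧
     (∑ i : Fin d, (if (i : ℕ) < m then α₂ else if (i : ℕ) < d - n then μ i else α₁)) = 1 ∧
     (1 / 2 : ℝ) * (∑ i : Fin d,
        |(if (i : ℕ) < m then α₂ else if (i : ℕ) < d - n then μ i else α₁) - μ i|) = ε) ∧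
    (∀ p : Fin d → ℝ, (∀ i, 0 ≤ p i) → ∑ i, p i = 1 →
      (1 / 2 : ℝ) * ∑ i, |p i - μ i| ≤ ε →
      vMaj (fun i : Fin d => if (i : ℕ) < m then α₂ else if (i : ℕ) < d - n then μ i else α₁)
        p) := by
  have hα : α₁ ≤ α₂ :=
    (le_one_div_of_sum_posPart_sub_le hμ1 hfar h₁.sum_posPart_sub.le).trans
      (one_div_le_of_sum_posPart_sub_le hμ1 hfar h₂.sum_posPart_sub.le)
  exact ⟨⟨pstar_pos h₁ h₂ hα (h₁.pos hμ0), sum_pstar hμ1 h₁ h₂ hα,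
      half_sum_abs_pstar_sub h₁ h₂ hα⟩,
    fun p _ hp1 hpε => vMaj_pstar hsort hμ1 h₁ h₂ hα hp1 hpε⟩

/-- The vector `p*_ε(q)` (equal to `α₂` on the first `m` coordinates, to
`μᵢ` in the middle, and to `α₁` on the last `n` coordinates) is a strictly positive
probability vector at trace distance exactly `ε` from `q = μ`, and it is majorized by every
`p ∈ B_ε(q)`. -/
theorem pstar_minimal_in_majorization
    {d : ℕ} (hd : 2 ≤ d) (μ : Fin d → ℝ)
    (hμ0 : ∀ i, 0 ≤ μ i) (hμ1 : ∑ i, μ i = 1)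
    (hsort : ∀ i j : Fin d, i ≤ j → μ j ≤ μ i)
    (ε : ℝ) (hε : ε ∈ Set.Ioc (0 : ℝ) 1)
    (hfar : ε < (1 / 2 : ℝ) * ∑ i, |μ i - 1 / d|)
    (α₁ : ℝ) (n : ℕ) (α₂ : ℝ) (m : ℕ)
    (h₁ : lowCond μ ε α₁ n) (h₂ : highCond μ ε α₂ m) :
    ((∀ i : Fin d,
        0 < (if (i : ℕ) < m then α₂ else if (i : ℕ) < d - n then μ i else α₁)) ∧
     (∑ i : Fin d, (if (i : ℕ) < m then α₂ else if (i : ℕ) < d - n then μ i else α₁)) = 1 ∧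
     (1 / 2 : ℝ) * (∑ i : Fin d,
        |(if (i : ℕ) < m then α₂ else if (i : ℕ) < d - n then μ i else α₁) - μ i|) = ε) ∧
    (∀ p : Fin d → ℝ, (∀ i, 0 ≤ p i) → ∑ i, p i = 1 →
      (1 / 2 : ℝ) * ∑ i, |p i - μ i| ≤ ε →
      vMaj (fun i : Fin d => if (i : ℕ) < m then α₂ else if (i : ℕ) < d - n then μ i else α₁)
        p) :=
  pstar_minimal_in_majorization_general μ hμ0 hμ1 hsort ε hfar α₁ n α₂ m h₁ h₂
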